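/- (Equation (3.66)/(a.1).) For every μ₁ ∈ [0,1], with μ₂ := 1−μ₁: L(μ₁,1−μ₁) = 1/√(1+(2μ₁−1)²). -/

import Mathlib

open MeasureTheory

/-- The modified Bessel function of order zero. -/
noncomputable def I0 (x : ℝ) : ℝ :=
  (1 / Real.pi) * ∫ θ in (0:ℝ)..Real.pi, Real.exp (x * Real.cos θ)

/-- The function `L(μ₁,μ₂)` of (3.65b). -/
noncomputable def Lfun (μ₁ μ₂ : ℝ) : ℝ :=
  ∫ l in Set.Ioi (0:ℝ), ∫ r in Set.Ioi (0:ℝ),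
    Real.exp (-2 * l) * Real.exp (-(μ₁ ^ 2 + μ₂ ^ 2) * r) *
      (I0 (|μ₁ - μ₂| * Real.sqrt (l * r))) ^ 2

/-!
Expanding `exp (x cos θ)` and integrating termwise with Wallis' integrals gives
`I₀(x) = ∑ (x²/4)ᵏ / (k!)²`, and Vandermonde's identity `∑ C(n,k)² = C(2n,n)` turns the
Cauchy square into `I₀(x)² = ∑ C(2n,n) (x²/4)ⁿ / (n!)²`. Against `e^{-αλ} e^{-βρ}` the term
`(λρ)ⁿ` integrates to `(n!)² / (αβ)ⁿ⁺¹`, so the double integral is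
`(αβ)⁻¹ ∑ C(2n,n) (c²/4αβ)ⁿ = (αβ)⁻¹ (1 - c²/αβ)^{-1/2}` by the binomial series.
For `L(μ₁, μ₂)` one has `α = 2`, `β = μ₁² + μ₂²`, `c = |μ₁ - μ₂|` and `αβ - c² = (μ₁ + μ₂)²`.
-/

open Real Set Nat Finset

theorem Ring.multichoose_half (n : ℕ) :
    Ring.multichoose (1 / 2 : ℝ) n = n.centralBinom / 4 ^ n := by
  have hpoch : (ascPochhammer ℝ n).eval (1 / 2 : ℝ) = n ! * n.centralBinom / 4 ^ n := by
    induction n with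
    | zero => simp
    | succ n ih =>
      have h : ((n + 1 : ℕ) : ℝ) * (n + 1).centralBinom = 2 * (2 * n + 1) * n.centralBinom := by
        exact_mod_cast Nat.succ_mul_centralBinom_succ n
      rw [ascPochhammer_succ_eval, ih, factorial_succ, pow_succ]
      push_cast at h ⊢
      field_simp
      linear_combination (-2 : ℝ) * h
  have h := Ring.factorial_nsmul_multichoose_eq_ascPochhammer (1 / 2 : ℝ) n
  rw [Polynomial.ascPochhammer_smeval_eq_eval, hpoch, nsmul_eq_mul] at h
  have : (n ! : ℝ) ≠ 0 := by positivity
  field_simp at h ⊢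
  linear_combination h

theorem hasSum_centralBinom_mul_pow {x : ℝ} (hx : |x| < 1) :
    HasSum (fun n => (n.centralBinom : ℝ) * (x / 4) ^ n) (1 / √(1 - x)) := by
  have h := (one_div_one_sub_rpow_hasFPowerSeriesOnBall_zero (1 / 2)).hasSum
    (y := x) (by simpa [enorm_eq_nnnorm, ← NNReal.coe_lt_coe] using hx)
  rw [FormalMultilinearSeries.ofScalars_apply_eq', zero_add, ← sqrt_eq_rpow] at h
  simp_rw [smul_eq_mul, ← Ring.multichoose_eq, Ring.multichoose_half] at h
  have e : (fun n : ℕ => (n.centralBinom : ℝ) * (x / 4) ^ n) =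
      fun n => n.centralBinom / 4 ^ n * x ^ n := funext fun n => by rw [div_pow]; ring
  rw [e]
  exact h

theorem integral_cos_pow_add_two_zero_pi (n : ℕ) :
    ∫ θ in 0..π, cos θ ^ (n + 2) = (n + 1) / (n + 2) * ∫ θ in 0..π, cos θ ^ n := by
  simp [integral_cos_pow]

theorem integral_cos_pow_odd_zero_pi (k : ℕ) : ∫ θ in 0..π, cos θ ^ (2 * k + 1) = 0 := by
  induction k with
  | zero => simp
  | succ k ih => rw [show 2 * (k + 1) + 1 = 2 * k + 1 + 2 by ring,
      integral_cos_pow_add_two_zero_pi, ih, mul_zero]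

theorem integral_cos_pow_even_zero_pi (k : ℕ) :
    ∫ θ in 0..π, cos θ ^ (2 * k) = π * (2 * k)! / (4 ^ k * (k ! : ℝ) ^ 2) := by
  induction k with
  | zero => simp
  | succ k ih =>
    rw [show 2 * (k + 1) = 2 * k + 2 by ring, integral_cos_pow_add_two_zero_pi, ih,
      factorial_succ, factorial_succ, factorial_succ]
    push_cast
    field_simp
    ring

theorem hasSum_I0 (x : ℝ) : HasSum (fun k => (x ^ 2 / 4) ^ k / (k ! : ℝ) ^ 2) (I0 x) := by
  have hexp : HasSum (fun n => ∫ θ in 0..π, (x * cos θ) ^ n / n !)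
      (∫ θ in 0..π, exp (x * cos θ)) := by
    refine intervalIntegral.hasSum_integral_of_dominated_convergence (fun n _ => |x| ^ n / n !)
      (fun n => by fun_prop) (fun n => ae_of_all _ fun θ _ => ?_)
      (ae_of_all _ fun _ _ => summable_pow_div_factorial |x|) intervalIntegrable_const
      (ae_of_all _ fun θ _ => by simpa [exp_eq_exp_ℝ] using
        NormedSpace.expSeries_div_hasSum_exp (x * cos θ))
    rw [norm_div, norm_pow, norm_mul, norm_natCast, norm_eq_abs, norm_eq_abs]
    gcongr
    exact mul_le_of_le_one_right (abs_nonneg x) (abs_cos_le_one θ)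
  have hterm (n : ℕ) : ∫ θ in 0..π, (x * cos θ) ^ n / n ! =
      x ^ n / n ! * ∫ θ in 0..π, cos θ ^ n := by
    simp_rw [mul_pow, mul_div_right_comm _ (cos _ ^ n)]
    rw [intervalIntegral.integral_const_mul]
  simp_rw [hterm] at hexp
  have hodd : ∀ n ∉ range (2 * ·), x ^ n / n ! * ∫ θ in 0..π, cos θ ^ n = 0 := by
    intro n hn
    obtain ⟨k, rfl⟩ : Odd n := by simpa [← not_even_iff_odd, even_iff_two_dvd] using hn
    rw [integral_cos_pow_odd_zero_pi, mul_zero]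
  have heven := ((mul_right_injective₀ two_ne_zero).hasSum_iff hodd).mpr hexp
  refine (heven.mul_left (1 / π)).congr_fun fun k => ?_
  simp only [Function.comp_apply, integral_cos_pow_even_zero_pi]
  rw [pow_mul, div_pow]
  field_simp

theorem sum_range_pow_div_factorial_sq_mul {K : Type*} [Field K] [CharZero K] (y : K) (n : ℕ) :
    ∑ k ∈ range (n + 1), y ^ k / (k ! : K) ^ 2 * (y ^ (n - k) / ((n - k)! : K) ^ 2) =
      n.centralBinom * y ^ n / (n ! : K) ^ 2 := by
  have hterm : ∀ k ∈ range (n + 1), y ^ k / (k ! : K) ^ 2 * (y ^ (n - k) / ((n - k)! : K) ^ 2) =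
      (n.choose k : K) ^ 2 * y ^ n / (n ! : K) ^ 2 := by
    intro k hk
    have hkn : k ≤ n := mem_range_succ_iff.mp hk
    rw [Nat.cast_choose K hkn, ← pow_mul_pow_sub y hkn]
    field_simp
    rw [mul_div_mul_right _ _ (by exact_mod_cast factorial_ne_zero n)]
  rw [sum_congr rfl hterm, ← sum_div, ← sum_mul, centralBinom_eq_two_mul_choose,
    ← Nat.sum_range_choose_sq]
  push_cast
  rfl

theorem hasSum_I0_sq (x : ℝ) :
    HasSum (fun n => n.centralBinom * (x ^ 2 / 4) ^ n / (n ! : ℝ) ^ 2) (I0 x ^ 2) := by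
  have hnorm : Summable fun k => ‖(x ^ 2 / 4) ^ k / (k ! : ℝ) ^ 2‖ :=
    (hasSum_I0 x).summable.congr fun k => (norm_of_nonneg (by positivity)).symm
  have h := hasSum_sum_range_mul_of_summable_norm hnorm hnorm
  rw [(hasSum_I0 x).tsum_eq, ← sq] at h
  simpa only [sum_range_pow_div_factorial_sq_mul] using h

theorem integral_pow_mul_exp_neg_mul_Ioi (n : ℕ) {b : ℝ} (hb : 0 < b) :
    ∫ t in Ioi 0, t ^ n * exp (-b * t) = n ! / b ^ (n + 1) := by
  have h := integral_rpow_mul_exp_neg_mul_Ioi (a := n + 1) (by positivity) hb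
  rw [add_sub_cancel_right, Gamma_nat_eq_factorial, ← cast_succ, rpow_natCast, div_pow,
    one_pow, one_div_mul_eq_div] at h
  rw [← h]
  refine setIntegral_congr_fun measurableSet_Ioi fun t _ => ?_
  rw [rpow_natCast, neg_mul]

theorem integrableOn_pow_mul_exp_neg_mul_Ioi (n : ℕ) {b : ℝ} (hb : 0 < b) :
    IntegrableOn (fun t => t ^ n * exp (-b * t)) (Ioi 0) := by
  simpa [rpow_natCast] using
    integrableOn_rpow_mul_exp_neg_mul_rpow (s := n) (p := 1) (by linarith [n.cast_nonneg (α := ℝ)])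
      one_pos hb

theorem hasSum_integral_Ioi_mul_exp_neg_mul {f : ℝ → ℝ} {a : ℕ → ℝ} {b : ℝ} (hb : 0 < b)
    (hf : ∀ t > 0, HasSum (fun n => a n * t ^ n) (f t))
    (ha : Summable fun n => |a n| * (n ! / b ^ (n + 1))) :
    HasSum (fun n => a n * (n ! / b ^ (n + 1))) (∫ t in Ioi 0, f t * exp (-b * t)) := by
  have hnorm (n : ℕ) : ∫ t in Ioi 0, ‖a n * (t ^ n * exp (-b * t))‖ =
      |a n| * (n ! / b ^ (n + 1)) := by
    rw [← integral_pow_mul_exp_neg_mul_Ioi n hb, ← integral_const_mul]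
    refine setIntegral_congr_fun measurableSet_Ioi fun t (ht : 0 < t) => ?_
    rw [norm_mul, norm_eq_abs, norm_of_nonneg (by positivity)]
  have h := hasSum_integral_of_summable_integral_norm
    (fun n => (integrableOn_pow_mul_exp_neg_mul_Ioi n hb).const_mul (a n))
    (ha.congr fun n => (hnorm n).symm)
  have hterm (n : ℕ) :
      ∫ t in Ioi 0, a n * (t ^ n * exp (-b * t)) = a n * (n ! / b ^ (n + 1)) := by
    rw [integral_const_mul, integral_pow_mul_exp_neg_mul_Ioi n hb]
  simp only [hterm] at h
  have hlim : ∫ t in Ioi 0, f t * exp (-b * t) =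
      ∫ t in Ioi 0, ∑' n, a n * (t ^ n * exp (-b * t)) :=
    setIntegral_congr_fun measurableSet_Ioi fun t (ht : 0 < t) => by
      simpa only [← mul_assoc] using ((hf t ht).mul_right (exp (-b * t))).tsum_eq.symm
  rwa [hlim]

theorem hasSum_integral_Ioi_I0_sq_mul_exp_neg_mul (c : ℝ) {β l : ℝ} (hβ : 0 < β) (hl : 0 ≤ l) :
    HasSum (fun n => n.centralBinom * (c ^ 2 / (4 * β)) ^ n / (n ! * β) * l ^ n)
      (∫ r in Ioi 0, I0 (c * √(l * r)) ^ 2 * exp (-β * r)) := by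
  have hseries (r : ℝ) (hr : 0 < r) : HasSum
      (fun n => n.centralBinom * (c ^ 2 / 4) ^ n / (n ! : ℝ) ^ 2 * l ^ n * r ^ n)
      (I0 (c * √(l * r)) ^ 2) := by
    convert hasSum_I0_sq (c * √(l * r)) using 3 with n
    rw [mul_pow, sq_sqrt (by positivity)]
    ring
  have hsum : Summable fun n =>
      |n.centralBinom * (c ^ 2 / 4) ^ n / (n ! : ℝ) ^ 2 * l ^ n| * (n ! / β ^ (n + 1)) := by
    refine ((summable_pow_div_factorial (c ^ 2 * l / β)).div_const β).of_nonneg_of_le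
      (fun n => by positivity) fun n => ?_
    have h4 : (n.centralBinom : ℝ) ≤ 4 ^ n := by exact_mod_cast centralBinom_le_four_pow n
    have hfactor : |n.centralBinom * (c ^ 2 / 4) ^ n / (n ! : ℝ) ^ 2 * l ^ n| *
        (n ! / β ^ (n + 1)) = n.centralBinom / 4 ^ n * ((c ^ 2 * l / β) ^ n / n ! / β) := by
      rw [abs_of_nonneg (by positivity)]
      simp only [div_pow, mul_pow, pow_succ]
      field_simp
    rw [hfactor]
    exact mul_le_of_le_one_left (by positivity) ((div_le_one (by positivity)).mpr h4)
  refine (hasSum_integral_Ioi_mul_exp_neg_mul hβ hseries hsum).congr_fun fun n => ?_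
  simp only [div_pow, mul_pow, pow_succ]
  field_simp

theorem integral_exp_mul_exp_mul_I0_sq {α β c : ℝ} (hα : 0 < α) (hβ : 0 < β)
    (hc : c ^ 2 < α * β) :
    ∫ l in Ioi 0, ∫ r in Ioi 0, exp (-α * l) * exp (-β * r) * I0 (c * √(l * r)) ^ 2 =
      1 / √(α * β * (α * β - c ^ 2)) := by
  set b : ℕ → ℝ := fun n => n.centralBinom * (c ^ 2 / (4 * β)) ^ n / (n ! * β)
  have hinner : ∀ l ∈ Ioi (0 : ℝ),
      ∫ r in Ioi 0, exp (-α * l) * exp (-β * r) * I0 (c * √(l * r)) ^ 2 =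
        (∑' n, b n * l ^ n) * exp (-α * l) := by
    intro l (hl : 0 < l)
    have hfactor : ∫ r in Ioi 0, exp (-α * l) * exp (-β * r) * I0 (c * √(l * r)) ^ 2 =
        exp (-α * l) * ∫ r in Ioi 0, I0 (c * √(l * r)) ^ 2 * exp (-β * r) := by
      rw [← integral_const_mul]
      congr 1 with r
      ring
    rw [hfactor, (hasSum_integral_Ioi_I0_sq_mul_exp_neg_mul c hβ hl.le).tsum_eq, mul_comm]
  set x := c ^ 2 / (α * β)
  have hx : |x| < 1 := by
    rw [abs_of_nonneg (by positivity), div_lt_one (by positivity)]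
    exact hc
  have hterm (n : ℕ) :
      b n * (n ! / α ^ (n + 1)) = 1 / (α * β) * (n.centralBinom * (x / 4) ^ n) := by
    simp only [b, x]
    rw [pow_succ, div_pow, div_pow, div_pow, mul_pow, mul_pow]
    field_simp
    ring
  have hgen := ((hasSum_centralBinom_mul_pow hx).mul_left (1 / (α * β))).congr_fun hterm
  have h : HasSum (fun n => b n * (n ! / α ^ (n + 1)))
      (∫ l in Ioi 0, (∑' n, b n * l ^ n) * exp (-α * l)) :=
    hasSum_integral_Ioi_mul_exp_neg_mul hα
      (fun l hl => (hasSum_integral_Ioi_I0_sq_mul_exp_neg_mul c hβ hl.le).summable.hasSum)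
      (hgen.summable.congr fun n => by rw [abs_of_nonneg (by positivity)])
  have hdisc : α * β * (α * β - c ^ 2) = (α * β) ^ 2 * (1 - x) := by
    simp only [x]
    field_simp
  rw [setIntegral_congr_fun measurableSet_Ioi hinner, h.unique hgen, hdisc,
    sqrt_mul (sq_nonneg _), sqrt_sq (by positivity)]
  field_simp

theorem Lfun_eq {μ₁ μ₂ : ℝ} (h : μ₁ + μ₂ ≠ 0) :
    Lfun μ₁ μ₂ = 1 / √(2 * (μ₁ ^ 2 + μ₂ ^ 2) * (μ₁ + μ₂) ^ 2) := by
  have hpos : 0 < (μ₁ + μ₂) ^ 2 := by positivity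
  rw [Lfun, integral_exp_mul_exp_mul_I0_sq two_pos (by nlinarith [sq_nonneg (μ₁ - μ₂)])
    (by rw [sq_abs]; nlinarith), sq_abs]
  congr 2
  ring

theorem Lfun_eval (μ₁ : ℝ) :
    Lfun μ₁ (1 - μ₁) = 1 / Real.sqrt (1 + (2 * μ₁ - 1) ^ 2) := by
  rw [Lfun_eq (by norm_num)]
  congr 2
  ring
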